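/- Let n ≥ 2 and consider the cost c(x,y) = −(1/2)·log‖x − y‖² on {(x,y) ∈ ℝⁿ × ℝⁿ : x ≠ y}. Then −∇ₓc(x,y) = (y − x)/‖x − y‖², so the c-exponential map is c-Expₓ(p) = x + p/‖p‖² for p ≠ 0. For every x ∈ ℝⁿ, every p ∈ ℝⁿ with p ≠ 0, and all nonzero vectors η, ξ ∈ ℝⁿ with ⟨η, ξ⟩ = 0, the c-sectional curvature is strictly positive: (d²/dt²)|_{t=0} [−D²ₓₓc](x, x + (p + tξ)/‖p + tξ‖²)(η, η) > 0. -/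

import Mathlib

/-!
At `y = x + q/‖q‖²` one has `x - y = -q/‖q‖²`, so the explicit Hessian of the logarithmic cost
gives `-D²ₓₓc(x, y)(η, η) = ‖η‖²‖q‖² - 2⟪q, η⟫²`. Along `q = p + tξ` with `ξ ⊥ η` the inner
product `⟪q, η⟫` does not move, so this is a quadratic polynomial in `t` with leading coefficient
`‖η‖²‖ξ‖²`, and its second derivative `2‖η‖²‖ξ‖²` is positive.
-/

open scoped RealInnerProductSpace

theorem iteratedFDeriv_two_apply_eq_fderiv_fderiv_apply {𝕜 E F : Type*} [NontriviallyNormedField 𝕜]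
    [NormedAddCommGroup E] [NormedSpace 𝕜 E] [NormedAddCommGroup F] [NormedSpace 𝕜 F]
    {f : E → F} {z : E} (hf : DifferentiableAt 𝕜 (fderiv 𝕜 f) z) (u v : E) :
    iteratedFDeriv 𝕜 2 f z ![u, v] = fderiv 𝕜 (fun w => fderiv 𝕜 f w v) z u := by
  rw [iteratedFDeriv_two_apply, fderiv_clm_apply hf (differentiableAt_const v)]
  simp

theorem deriv_deriv_quadratic (a b c t : ℝ) :
    deriv (deriv fun s : ℝ => a * s ^ 2 + b * s + c) t = 2 * a := by
  have hderiv (s : ℝ) : HasDerivAt (fun s : ℝ => a * s ^ 2 + b * s + c) (2 * a * s + b) s := by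
    refine ((((hasDerivAt_pow 2 s).const_mul a).add ((hasDerivAt_id' s).const_mul b)).add_const
      c).congr_deriv ?_
    norm_num
    ring
  rw [funext fun s => (hderiv s).deriv]
  simp

noncomputable section LogCost

variable {E : Type*} [NormedAddCommGroup E] [InnerProductSpace ℝ E]

def logCost (x y : E) : ℝ := -(1 / 2 : ℝ) * Real.log (‖x - y‖ ^ 2)

variable {y z : E}

theorem contDiffAt_logCost {n : WithTop ℕ∞} (hz : z ≠ y) : ContDiffAt ℝ n (logCost · y) z := by
  have hsq : ContDiffAt ℝ n (fun x : E => ‖x - y‖ ^ 2) z :=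
    (contDiff_norm_sq ℝ).contDiffAt.comp z (contDiffAt_id.sub contDiffAt_const)
  exact contDiffAt_const.mul (hsq.log (by simpa [sub_eq_zero] using hz))

theorem hasFDerivAt_logCost (hz : z ≠ y) :
    HasFDerivAt (logCost · y) (-(‖z - y‖ ^ 2)⁻¹ • innerSL ℝ (z - y)) z := by
  have hsq : HasFDerivAt (fun x : E => ‖x - y‖ ^ 2) (2 • innerSL ℝ (z - y)) z := by
    simpa using ((hasFDerivAt_id z).sub_const y).norm_sq
  refine (((Real.hasDerivAt_log (by simpa [sub_eq_zero] using hz)).comp_hasFDerivAt z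
    hsq).const_mul (-(1 / 2 : ℝ))).congr_fderiv ?_
  ext v
  simp only [one_div, map_sub, neg_smul, neg_apply, smul_apply, sub_apply, coe_innerSL_apply,
    nsmul_eq_mul, Nat.cast_ofNat, smul_eq_mul, neg_inj]
  ring

theorem fderiv_logCost_apply (hz : z ≠ y) (v : E) :
    fderiv ℝ (logCost · y) z v = -(⟪z - y, v⟫ / ‖z - y‖ ^ 2) := by
  simp [(hasFDerivAt_logCost hz).fderiv, div_eq_inv_mul, inner_sub_left]

theorem iteratedFDeriv_two_logCost (hz : z ≠ y) (η : E) :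
    iteratedFDeriv ℝ 2 (logCost · y) z ![η, η]
      = (2 * ⟪z - y, η⟫ ^ 2 - ‖η‖ ^ 2 * ‖z - y‖ ^ 2) / ‖z - y‖ ^ 4 := by
  have hdiff : DifferentiableAt ℝ (fderiv ℝ (logCost · y)) z :=
    ((contDiffAt_logCost (n := 2) hz).fderiv_right (m := 1) le_rfl).differentiableAt one_ne_zero
  have hnear : (fun w => fderiv ℝ (logCost · y) w η) =ᶠ[nhds z]
      fun w => -(⟪w - y, η⟫ * (‖w - y‖ ^ 2)⁻¹) := by
    filter_upwards [isOpen_ne.mem_nhds hz] with w hw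
    rw [fderiv_logCost_apply hw, div_eq_mul_inv]
  have hsq : HasFDerivAt (fun w : E => ‖w - y‖ ^ 2) (2 • innerSL ℝ (z - y)) z := by
    simpa using ((hasFDerivAt_id z).sub_const y).norm_sq
  have hinner := ((hasFDerivAt_id z).sub_const y).inner ℝ (hasFDerivAt_const η z)
  have hquot : HasFDerivAt (fun w => -(⟪w - y, η⟫ * (‖w - y‖ ^ 2)⁻¹)) _ z :=
    (hinner.mul ((hasDerivAt_inv (by simpa [sub_eq_zero] using hz)).comp_hasFDerivAt z hsq)).neg
  have hzy : ‖z - y‖ ≠ 0 := by simpa [sub_eq_zero] using hz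
  rw [iteratedFDeriv_two_apply_eq_fderiv_fderiv_apply hdiff, hnear.fderiv_eq, hquot.fderiv]
  simp only [id_eq, real_inner_comm η, map_sub, neg_smul, smul_neg, Function.comp_apply,
    neg_add_rev, neg_neg, add_apply, neg_apply, smul_apply, sub_apply, zero_apply,
    ContinuousLinearMap.comp_apply, ContinuousLinearMap.prod_apply, ContinuousLinearMap.id_apply,
    fderivInnerCLM_apply, inner_zero_right, real_inner_self_eq_norm_sq, zero_add, smul_eq_mul,
    coe_innerSL_apply, nsmul_eq_mul, Nat.cast_ofNat]
  field_simp
  rw [inner_sub_right]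
  ring

def cExp (x p : E) : E := x + (‖p‖ ^ 2)⁻¹ • p

theorem neg_iteratedFDeriv_two_logCost_cExp (x : E) {q : E} (hq : q ≠ 0) (η : E) :
    -iteratedFDeriv ℝ 2 (logCost · (cExp x q)) x ![η, η] = ‖η‖ ^ 2 * ‖q‖ ^ 2 - 2 * ⟪q, η⟫ ^ 2 := by
  have hsub : x - cExp x q = -((‖q‖ ^ 2)⁻¹ • q) := by simp [cExp]
  have hne : x ≠ cExp x q := by
    rw [← sub_ne_zero, hsub, neg_ne_zero, smul_ne_zero_iff]
    exact ⟨by positivity, hq⟩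
  have hq₀ : ‖q‖ ≠ 0 := norm_ne_zero_iff.mpr hq
  rw [iteratedFDeriv_two_logCost hne, hsub]
  simp only [norm_neg, inner_neg_left, norm_smul, real_inner_smul_left, norm_inv, norm_pow,
    Real.norm_eq_abs, abs_norm]
  field_simp
  ring

theorem deriv_deriv_neg_iteratedFDeriv_two_logCost_cExp_add_smul (x : E) {p : E} (hp : p ≠ 0)
    {η ξ : E} (hperp : ⟪η, ξ⟫ = 0) :
    deriv (deriv fun t : ℝ => -iteratedFDeriv ℝ 2 (logCost · (cExp x (p + t • ξ))) x ![η, η]) 0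
      = 2 * (‖η‖ ^ 2 * ‖ξ‖ ^ 2) := by
  have hne : ∀ᶠ t : ℝ in nhds 0, p + t • ξ ≠ 0 :=
    (continuous_const.add (continuous_id.smul continuous_const)).continuousAt.eventually_ne
      (by simpa using hp)
  have hquad : (fun t : ℝ => -iteratedFDeriv ℝ 2 (logCost · (cExp x (p + t • ξ))) x ![η, η])
      =ᶠ[nhds 0] fun t => (‖η‖ ^ 2 * ‖ξ‖ ^ 2) * t ^ 2 + (2 * ‖η‖ ^ 2 * ⟪p, ξ⟫) * t
        + (‖η‖ ^ 2 * ‖p‖ ^ 2 - 2 * ⟪p, η⟫ ^ 2) := by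
    filter_upwards [hne] with t ht
    rw [neg_iteratedFDeriv_two_logCost_cExp x ht, norm_add_sq_real, inner_add_left,
      real_inner_smul_left, real_inner_smul_right, norm_smul, real_inner_comm η ξ, hperp]
    simp only [Real.norm_eq_abs, mul_pow, sq_abs]
    ring
  rw [hquad.deriv.deriv_eq, deriv_deriv_quadratic]

end LogCost

theorem statement19_general {n : ℕ}
    (c : EuclideanSpace ℝ (Fin n) → EuclideanSpace ℝ (Fin n) → ℝ)
    (hc : ∀ x y : EuclideanSpace ℝ (Fin n), c x y = -(1/2 : ℝ) * Real.log (‖x - y‖ ^ 2))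
    (x p η ξ : EuclideanSpace ℝ (Fin n))
    (hp : p ≠ 0) (hη : η ≠ 0) (hξ : ξ ≠ 0) (hperp : ⟪η, ξ⟫ = 0) :
    0 < deriv (deriv (fun t : ℝ =>
      -(iteratedFDeriv ℝ 2
          (fun x' => c x' (x + (‖p + t • ξ‖ ^ 2)⁻¹ • (p + t • ξ))) x ![η, η]))) 0 := by
  obtain rfl : c = logCost := funext fun x => funext (hc x)
  change 0 < deriv (deriv fun t : ℝ =>
    -iteratedFDeriv ℝ 2 (logCost · (cExp x (p + t • ξ))) x ![η, η]) 0
  rw [deriv_deriv_neg_iteratedFDeriv_two_logCost_cExp_add_smul x hp hperp]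
  have := norm_pos_iff.mpr hη
  have := norm_pos_iff.mpr hξ
  positivity

/-- For the logarithmic cost `c(x,y) = -(1/2) log ‖x-y‖²` on `ℝⁿ × ℝⁿ \ {x = y}`, `n ≥ 2`,
with `c`-exponential map `c-Expₓ(p) = x + p/‖p‖²`, the `c`-sectional curvature
`(d²/dt²)|₀ [-D²ₓₓ c](x, c-Expₓ(p + tξ))(η,η)` is strictly positive for all nonzero
orthogonal vectors `η, ξ` and all `p ≠ 0`. -/
theorem statement19 {n : ℕ} (hn : 2 ≤ n)
    (c : EuclideanSpace ℝ (Fin n) → EuclideanSpace ℝ (Fin n) → ℝ)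
    (hc : ∀ x y : EuclideanSpace ℝ (Fin n), c x y = -(1/2 : ℝ) * Real.log (‖x - y‖ ^ 2))
    (x p η ξ : EuclideanSpace ℝ (Fin n))
    (hp : p ≠ 0) (hη : η ≠ 0) (hξ : ξ ≠ 0) (hperp : ⟪η, ξ⟫ = 0) :
    0 < deriv (deriv (fun t : ℝ =>
      -(iteratedFDeriv ℝ 2
          (fun x' => c x' (x + (‖p + t • ξ‖ ^ 2)⁻¹ • (p + t • ξ))) x ![η, η]))) 0 :=
  statement19_general c hc x p η ξ hp hη hξ hperp
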